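/- For every ε > 0, β ∈ (0,1), integers u ≥ 2, T ≥ 1, and α' > 0: if there exists an ε-differentially private continual-observation range-counting mechanism over [u] with error α' and failure probability β (privacy with respect to fully dynamic set streams differing in one operation), then there exists an ε-differentially private continual-observation predecessor mechanism over [u] with error bounds α_t = 2α' + 1 for all t ≤ T and failure probability β. -/

import Mathlib

open MeasureTheory

/-- Base-2 logarithm where the argument is clamped below by 2. -/
noncomputable def log2c (z : ℝ) : ℝ := Real.logb 2 (max z 2)

/-- An operation of a fully dynamic set stream over the universe `Fin u`:
insert an element, delete an element, or leave the set unchanged. -/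
inductive SetOp (u : ℕ) where
  | ins : Fin u → SetOp u
  | del : Fin u → SetOp u
  | nop : SetOp u
deriving DecidableEq

instance {u : ℕ} : MeasurableSpace (SetOp u) := ⊤
instance {u : ℕ} : MeasurableSpace (Option (Fin u)) := ⊤

/-- Apply a set operation to the maintained set. -/
def SetOp.apply {u : ℕ} (D : Finset (Fin u)) : SetOp u → Finset (Fin u)
  | .ins z => insert z D
  | .del z => D.erase z
  | .nop => D

/-- The maintained set after the first `n` operations of an infinite stream. -/
def DsetN {u : ℕ} (x : ℕ → SetOp u) : ℕ → Finset (Fin u)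
  | 0 => ∅
  | n + 1 => SetOp.apply (DsetN x n) (x n)

/-- The maintained set `D_t` after the first `t+1` operations of a finite
stream (time steps 0-indexed). -/
def Dset {u T : ℕ} (x : Fin T → SetOp u) (t : Fin T) : Finset (Fin u) :=
  DsetN (fun n => if h : n < T then x ⟨n, h⟩ else SetOp.nop) (t.1 + 1)

/-- Two streams differ in exactly one operation. -/
def OneOpNeighboring {X : Type*} {T : ℕ} (x y : Fin T → X) : Prop :=
  ∃ t₀ : Fin T, x t₀ ≠ y t₀ ∧ ∀ s : Fin T, s ≠ t₀ → x s = y s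

/-- A continual-observation mechanism: a measurable assignment of output
distributions to input streams whose outputs up to time `t` depend only on the
first `t` inputs. -/
def IsCOMech {X O : Type*} [MeasurableSpace X] [MeasurableSpace O] {T : ℕ}
    (M : (Fin T → X) → Measure (Fin T → O)) : Prop :=
  Measurable M ∧ (∀ x, IsProbabilityMeasure (M x)) ∧
    ∀ (t : Fin T) (x y : Fin T → X), (∀ s, s ≤ t → x s = y s) →
      (M x).map (fun a (s : {s : Fin T // s ≤ t}) => a s.1) =
      (M y).map (fun a (s : {s : Fin T // s ≤ t}) => a s.1)

/-- `ε`-differential privacy with respect to streams differing in exactly one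
operation. -/
def IsOneOpDP {X O : Type*} [MeasurableSpace X] [MeasurableSpace O] {T : ℕ} (ε : ℝ)
    (M : (Fin T → X) → Measure (Fin T → O)) : Prop :=
  ∀ x y, OneOpNeighboring x y → ∀ S : Set (Fin T → O), MeasurableSet S →
    M x S ≤ ENNReal.ofReal (Real.exp ε) * M y S

/-- Correctness of a predecessor answer `r : Fin u → Option (Fin u)` at one
time step, for maintained set `D` and error bound `α`. -/
def PredAnswerGood {u : ℕ} (D : Finset (Fin u)) (r : Fin u → Option (Fin u))
    (α : ℝ) : Prop :=
  ∀ q : Fin u,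
    match r q with
    | some p => 1 ≤ ((D.filter fun z => p ≤ z ∧ z ≤ q).card : ℝ) ∧
        ((D.filter fun z => p ≤ z ∧ z ≤ q).card : ℝ) ≤ α
    | none => ((D.filter fun z => z ≤ q).card : ℝ) ≤ α

/-- Correctness of range-count answers `c : Fin u → Fin u → ℝ` at one time
step, for maintained set `D` and error bound `α` (only pairs `p ≤ q` count). -/
def RangeAnswerGood {u : ℕ} (D : Finset (Fin u)) (c : Fin u → Fin u → ℝ)
    (α : ℝ) : Prop :=
  ∀ p q : Fin u, p ≤ q →
    |c p q - ((D.filter fun z => p ≤ z ∧ z ≤ q).card : ℝ)| ≤ α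

/-!
The predecessor mechanism post-processes the range counts: it answers `q` with the largest
`p ≤ q` whose noisy count of `[p, q]` exceeds `α'`, and with `⊥` if there is none. A noisy count
above `α'` forces a true count of at least one, while the noisy count of `[p + 1, q]` is at most
`α'`, so the true count of `[p, q]` is at most `2α' + 1`; for `⊥` the true count of `[0, q]` is
at most `2α'`. Applying one fixed measurable map to the output of every time step preserves
`ε`-differential privacy and causality.
-/

section PostProcessing

variable {X O O' : Type*} [MeasurableSpace X] [MeasurableSpace O] [MeasurableSpace O'] {T : ℕ}
  {M : (Fin T → X) → Measure (Fin T → O)}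

theorem IsCOMech.map_pointwise (hM : IsCOMech M) {f : O → O'} (hf : Measurable f) :
    IsCOMech fun x => (M x).map fun a t => f (a t) := by
  obtain ⟨hM_meas, hM_prob, hM_causal⟩ := hM
  have hF : Measurable fun (a : Fin T → O) t => f (a t) := by fun_prop
  refine ⟨(Measure.measurable_map _ hF).comp hM_meas,
    fun x => have := hM_prob x; Measure.isProbabilityMeasure_map hF.aemeasurable,
    fun t x y hxy => ?_⟩
  have hcomm : ∀ z, ((M z).map fun a t => f (a t)).map (fun a (s : {s : Fin T // s ≤ t}) => a s.1)
      = ((M z).map fun a (s : {s : Fin T // s ≤ t}) => a s.1).map fun a s => f (a s) := by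
    intro z
    rw [Measure.map_map (by fun_prop) hF, Measure.map_map (by fun_prop) (by fun_prop)]
    rfl
  rw [hcomm x, hcomm y, hM_causal t x y hxy]

theorem IsOneOpDP.map {ε : ℝ} (hM : IsOneOpDP ε M) {F : (Fin T → O) → (Fin T → O')}
    (hF : Measurable F) : IsOneOpDP ε fun x => (M x).map F := by
  intro x y hxy S hS
  rw [Measure.map_apply hF hS, Measure.map_apply hF hS]
  exact hM x y hxy _ (hF hS)

end PostProcessing

section LastFlagged

variable {α : Type*} [LinearOrder α] [Fintype α]

noncomputable def lastFlagged (q : α) (b : α → Bool) : Option α :=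
  if h : (Finset.univ.filter fun p => p ≤ q ∧ b p).Nonempty then
    some ((Finset.univ.filter fun p => p ≤ q ∧ b p).max' h)
  else none

theorem lastFlagged_eq_some {q p : α} {b : α → Bool} (h : lastFlagged q b = some p) :
    p ≤ q ∧ b p ∧ ∀ r, p < r → r ≤ q → b r = false := by
  unfold lastFlagged at h
  split_ifs at h with hne
  obtain rfl := Option.some.inj h
  have hmem := Finset.max'_mem _ hne
  simp only [Finset.mem_filter, Finset.mem_univ, true_and] at hmem
  refine ⟨hmem.1, hmem.2, fun r hpr hrq => ?_⟩
  by_contra hr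
  rw [Bool.not_eq_false] at hr
  exact (Finset.le_max' (Finset.univ.filter fun p => p ≤ q ∧ b p) r (by simp [hrq, hr])).not_gt hpr

theorem lastFlagged_eq_none {q : α} {b : α → Bool} (h : lastFlagged q b = none) :
    ∀ p ≤ q, b p = false := by
  unfold lastFlagged at h
  split_ifs at h with hne
  intro p hpq
  by_contra hp
  exact hne ⟨p, by simp [hpq, hp]⟩

end LastFlagged

section Counting

variable {α : Type*} [LinearOrder α] (D : Finset α)

theorem card_filter_Icc_self_le_one (p : α) :
    (D.filter fun z => p ≤ z ∧ z ≤ p).card ≤ 1 :=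
  Finset.card_le_one.mpr fun _ ha _ hb => by
    simp only [Finset.mem_filter] at ha hb
    exact (le_antisymm ha.2.2 ha.2.1).trans (le_antisymm hb.2.2 hb.2.1).symm

theorem card_filter_Icc_le_of_covBy {p r : α} (hpr : p ⋖ r) (q : α) :
    (D.filter fun z => p ≤ z ∧ z ≤ q).card ≤ (D.filter fun z => r ≤ z ∧ z ≤ q).card + 1 := by
  refine (Finset.card_le_card fun z hz => ?_).trans (Finset.card_insert_le p _)
  simp only [Finset.mem_filter] at hz
  rcases hz.2.1.eq_or_lt with rfl | hpz
  · exact Finset.mem_insert_self _ _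
  · exact Finset.mem_insert_of_mem (Finset.mem_filter.mpr ⟨hz.1, hpr.ge_of_gt hpz, hz.2.2⟩)

end Counting

namespace RangeAnswerGood

variable {u : ℕ} {D : Finset (Fin u)} {c : Fin u → Fin u → ℝ} {α : ℝ}

theorem nonneg (h : RangeAnswerGood D c α) (q : Fin u) : 0 ≤ α :=
  (abs_nonneg _).trans (h q q le_rfl)

theorem one_le_card (h : RangeAnswerGood D c α) {p q : Fin u} (hpq : p ≤ q) (hc : α < c p q) :
    1 ≤ ((D.filter fun z => p ≤ z ∧ z ≤ q).card : ℝ) := by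
  have hpos : (0 : ℝ) < (D.filter fun z => p ≤ z ∧ z ≤ q).card := by
    linarith [(abs_le.mp (h p q hpq)).2]
  exact_mod_cast Nat.cast_pos.mp hpos

theorem card_le (h : RangeAnswerGood D c α) {p q : Fin u} (hpq : p ≤ q) (hc : c p q ≤ α) :
    ((D.filter fun z => p ≤ z ∧ z ≤ q).card : ℝ) ≤ 2 * α := by
  linarith [(abs_le.mp (h p q hpq)).1]

end RangeAnswerGood

noncomputable def predFromCounts {u : ℕ} (α : ℝ) (c : Fin u → Fin u → ℝ) (q : Fin u) :
    Option (Fin u) :=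
  lastFlagged q fun p => decide (α < c p q)

theorem measurable_predFromCounts {u : ℕ} (α : ℝ) : Measurable (predFromCounts (u := u) α) := by
  refine measurable_pi_lambda _ fun q => (measurable_of_countable (lastFlagged q)).comp ?_
  refine measurable_pi_lambda _ fun p => measurable_to_bool ?_
  have hcoord : Measurable fun c : Fin u → Fin u → ℝ => c p q := by fun_prop
  simpa [Set.preimage, decide_eq_true_eq] using measurableSet_lt measurable_const hcoord

theorem predAnswerGood_predFromCounts {u : ℕ} {D : Finset (Fin u)} {c : Fin u → Fin u → ℝ}
    {α : ℝ} (h : RangeAnswerGood D c α) : PredAnswerGood D (predFromCounts α c) (2 * α + 1) := by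
  intro q
  have hα := h.nonneg q
  rcases hq : predFromCounts α c q with _ | p
  · have : NeZero u := ⟨q.pos.ne'⟩
    have hflag := lastFlagged_eq_none hq 0 (Fin.zero_le q)
    simp only [decide_eq_false_iff_not, not_lt] at hflag
    have hcard := h.card_le (Fin.zero_le q) hflag
    simp only [Fin.zero_le, true_and] at hcard
    linarith
  · obtain ⟨hpq, hflag, hlast⟩ := lastFlagged_eq_some hq
    simp only [decide_eq_true_eq] at hflag
    refine ⟨h.one_le_card hpq hflag, ?_⟩
    rcases hpq.eq_or_lt with rfl | hlt
    · have := card_filter_Icc_self_le_one D p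
      have : ((D.filter fun z => p ≤ z ∧ z ≤ p).card : ℝ) ≤ 1 := by exact_mod_cast this
      linarith
    · obtain ⟨r, hpr, hrq⟩ := exists_covBy_le_of_lt hlt
      have hflag_r := hlast r hpr.lt hrq
      simp only [decide_eq_false_iff_not, not_lt] at hflag_r
      have hcard_r := h.card_le hrq hflag_r
      have : ((D.filter fun z => p ≤ z ∧ z ≤ q).card : ℝ) ≤
          (D.filter fun z => r ≤ z ∧ z ≤ q).card + 1 := by
        exact_mod_cast card_filter_Icc_le_of_covBy D hpr q
      linarith

theorem range_count_implies_predecessor_general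
    (ε β : ℝ) (u T : ℕ) (α' : ℝ)
    (hrc : ∃ M : (Fin T → SetOp u) → Measure (Fin T → Fin u → Fin u → ℝ),
      IsCOMech M ∧ IsOneOpDP ε M ∧
      ∀ x, ENNReal.ofReal (1 - β) ≤
        M x {a | ∀ t : Fin T, RangeAnswerGood (Dset x t) (a t) α'}) :
    ∃ M : (Fin T → SetOp u) → Measure (Fin T → Fin u → Option (Fin u)),
      IsCOMech M ∧ IsOneOpDP ε M ∧
      ∀ x, ENNReal.ofReal (1 - β) ≤
        M x {a | ∀ t : Fin T, PredAnswerGood (Dset x t) (a t) (2 * α' + 1)} := by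
  obtain ⟨M, hM, hM_dp, hM_acc⟩ := hrc
  have hF : Measurable fun (a : Fin T → Fin u → Fin u → ℝ) t => predFromCounts α' (a t) :=
    measurable_pi_lambda _ fun t => (measurable_predFromCounts α').comp (measurable_pi_apply t)
  refine ⟨_, hM.map_pointwise (measurable_predFromCounts α'), hM_dp.map hF, fun x => ?_⟩
  calc ENNReal.ofReal (1 - β)
      ≤ M x {a | ∀ t : Fin T, RangeAnswerGood (Dset x t) (a t) α'} := hM_acc x
    _ ≤ M x ((fun a t => predFromCounts α' (a t)) ⁻¹'
          {r | ∀ t : Fin T, PredAnswerGood (Dset x t) (r t) (2 * α' + 1)}) :=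
        measure_mono fun _ ha t => predAnswerGood_predFromCounts (ha t)
    _ ≤ _ := Measure.le_map_apply hF.aemeasurable _

theorem range_count_implies_predecessor
    (ε β : ℝ) (u T : ℕ) (α' : ℝ)
    (hε : 0 < ε) (hβ : β ∈ Set.Ioo (0 : ℝ) 1) (hu : 2 ≤ u) (hT : 1 ≤ T)
    (hα' : 0 < α')
    (hrc : ∃ M : (Fin T → SetOp u) → Measure (Fin T → Fin u → Fin u → ℝ),
      IsCOMech M ∧ IsOneOpDP ε M ∧
      ∀ x, ENNReal.ofReal (1 - β) ≤
        M x {a | ∀ t : Fin T, RangeAnswerGood (Dset x t) (a t) α'}) :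
    ∃ M : (Fin T → SetOp u) → Measure (Fin T → Fin u → Option (Fin u)),
      IsCOMech M ∧ IsOneOpDP ε M ∧
      ∀ x, ENNReal.ofReal (1 - β) ≤
        M x {a | ∀ t : Fin T, PredAnswerGood (Dset x t) (a t) (2 * α' + 1)} :=
  range_count_implies_predecessor_general ε β u T α' hrc
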